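/- Excess risk of constrained hypotheses under the mixture of tasks: Let Π = Π_{t∈[N]} P_t^{n_t} × D^{n_{N+1}} be a product distribution (D := P_{N+1}) such that some single h* ∈ H minimizes the risk under every P_t, t∈[N+1], and every P_t satisfies the Bernstein class condition with parameters (C_β, β). Fix I ⊆ [N+1], let N_I = Σ_{t∈I} n_t, P̄_I = N_I^{−1}·Σ_{t∈I} n_t·P_t, and Z^I the union of the samples from the tasks in I. Then, for any δ ∈ (0,1), with probability at least 1−δ (on the event of the uniform Bernstein inequality applied to S = Z^I), every h ∈ H satisfying Ê_{Z^I}(h; ĥ_{Z^I}) ≤ C_0·√( P̂_{Z^I}(h ≠ ĥ_{Z^I})·ε(N_I, δ) ) + C_0·ε(N_I, δ) also satisfies E_{P̄_I}(h) ≤ 32·C_0²·( C_β·ε(N_I, δ) )^{1/(2−β)}, where ĥ_{Z^I} is the ERM over Z^I and C_0 is the universal constant of the uniform Bernstein inequality. -/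

import Mathlib

/-!
Pooling the samples of the tasks in `I` gives one sample of `N_I` independent points whose
average distribution is `P̄_I`, so the uniform Bernstein inequality applies to it. As `h*`
minimizes every risk, concavity of `x ↦ x ^ β` averages the Bernstein conditions into
`P̄_I(g ≠ h*) ≤ C_β E_{P̄_I}(g) ^ β`. On the event, the empirical constraint on `h`, the ERM
property of `ĥ` and the triangle inequality for `P̂(h ≠ ĥ)` give, for `w = max(E(h), E(ĥ))`,
`w ≤ 3 C₀ √(C_β ε w ^ β) + O(C₀² ε)`; solving this fixed-point inequality gives
`w ≤ 32 C₀² (C_β ε) ^ (1 / (2 - β))`. The constant `32 C₀²` absorbs the others because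
`C₀ ≥ 1/3`: a single observation of a biased coin, falling on its less likely side with
probability `2/5 > δ`, already forces this.
-/

open MeasureTheory Finset

noncomputable section

namespace Paper

universe u

section Basic

variable {X : Type u} [MeasurableSpace X]

/-- 0-1 risk of a classifier under a distribution on `X × Bool`. -/
def risk (P : Measure (X × Bool)) (h : X → Bool) : ℝ :=
  (P {p | h p.1 ≠ p.2}).toReal

/-- Disagreement pseudo-distance `P(h ≠ h')` under the marginal. -/
def dis (P : Measure (X × Bool)) (h h' : X → Bool) : ℝ :=
  (P {p | h p.1 ≠ h' p.1}).toReal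

/-- Excess risk over the best in class. -/
def excess (H : Set (X → Bool)) (P : Measure (X × Bool)) (h : X → Bool) : ℝ :=
  risk P h - ⨅ h' : H, risk P (h' : X → Bool)

/-- `h` is a risk minimizer in `H` for `P`. -/
def IsOpt (H : Set (X → Bool)) (P : Measure (X × Bool)) (h : X → Bool) : Prop :=
  h ∈ H ∧ ∀ h' ∈ H, risk P h ≤ risk P h'

/-- Bernstein class condition with respect to a given minimizer. -/
def BernsteinAt (H : Set (X → Bool)) (P : Measure (X × Bool)) (hstar : X → Bool)
    (Cb β : ℝ) : Prop :=
  IsOpt H P hstar ∧ ∀ h ∈ H, dis P h hstar ≤ Cb * excess H P h ^ β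

/-- Bernstein class condition with parameters `(Cb, β)`. -/
def Bernstein (H : Set (X → Bool)) (P : Measure (X × Bool)) (Cb β : ℝ) : Prop :=
  ∃ hstar, BernsteinAt H P hstar Cb β

/-- `P` has transfer exponent `(Cr, ρ)` with respect to `D`. -/
def Transfer (H : Set (X → Bool)) (P D : Measure (X × Bool)) (Cr ρ : ℝ) : Prop :=
  ∀ h ∈ H, excess H D h ≤ Cr * excess H P h ^ (1 / ρ)

/-- `H` shatters the finite set `s`. -/
def Shatters (H : Set (X → Bool)) (s : Finset X) : Prop :=
  ∀ f : X → Bool, ∃ h ∈ H, ∀ x ∈ s, h x = f x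

/-- VC dimension of `H` is at most `d`. -/
def VCLE (H : Set (X → Bool)) (d : ℕ) : Prop :=
  ∀ s : Finset X, Shatters H s → s.card ≤ d

/-- VC dimension of `H` is exactly `d`. -/
def VCEq (H : Set (X → Bool)) (d : ℕ) : Prop :=
  VCLE H d ∧ ∃ s : Finset X, Shatters H s ∧ s.card = d

/-- The positive logarithm `log x = max (ln x) 1`. -/
def plog (x : ℝ) : ℝ := max (Real.log x) 1

/-- `ε(m, δ) = (d/m) log(m/d) + (1/m) log(1/δ)`. -/
def eps (d m : ℕ) (δ : ℝ) : ℝ :=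
  ((d : ℝ) / m) * plog ((m : ℝ) / d) + (1 / m) * plog (1 / δ)

/-- Empirical risk on a sample of size `m`. -/
def empRisk {m : ℕ} (S : Fin m → X × Bool) (h : X → Bool) : ℝ :=
  (∑ i, if h (S i).1 ≠ (S i).2 then (1 : ℝ) else 0) / m

/-- Excess empirical risk. -/
def empExcess {m : ℕ} (S : Fin m → X × Bool) (h h' : X → Bool) : ℝ :=
  empRisk S h - empRisk S h'

/-- Empirical disagreement pseudo-distance. -/
def empDis {m : ℕ} (S : Fin m → X × Bool) (h h' : X → Bool) : ℝ :=
  (∑ i, if h (S i).1 ≠ h' (S i).1 then (1 : ℝ) else 0) / m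

/-- `h` is an empirical risk minimizer over `H` for the sample `S`. -/
def IsERM (H : Set (X → Bool)) {m : ℕ} (S : Fin m → X × Bool) (h : X → Bool) : Prop :=
  h ∈ H ∧ ∀ h' ∈ H, empRisk S h ≤ empRisk S h'

end Basic

/-- The uniform Bernstein inequality (for VC classes and independent,
not necessarily identically distributed samples) holds with constant `C0`. -/
def UnifBernstein (C0 : ℝ) : Prop :=
  ∀ (Y : Type u) (_ : MeasurableSpace Y) (H : Set (Y → Bool)) (d : ℕ),
    VCEq H d →
    ∀ m : ℕ, 0 < m → ∀ δ : ℝ, 0 < δ → δ < 1 →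
    ∀ μ : Fin m → Measure (Y × Bool), (∀ i, IsProbabilityMeasure (μ i)) →
    ENNReal.ofReal (1 - δ) ≤
      Measure.pi μ {S : Fin m → Y × Bool | ∀ h ∈ H, ∀ h' ∈ H,
        ((∑ i, (risk (μ i) h - risk (μ i) h')) / m ≤
            empExcess S h h'
              + C0 * Real.sqrt
                  (min ((∑ i, dis (μ i) h h') / m) (empDis S h h') * eps d m δ)
              + C0 * eps d m δ)
        ∧ ((1 / 2) * ((∑ i, dis (μ i) h h') / m) - C0 * eps d m δ ≤ empDis S h h')
        ∧ (empDis S h h' ≤ 2 * ((∑ i, dis (μ i) h h') / m) + C0 * eps d m δ)}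

section Multi

variable {X : Type u} [MeasurableSpace X] {N : ℕ}

/-- The multisample distribution `Π = ∏_t P_t^{n_t}`. -/
def msM (P : Fin (N + 1) → Measure (X × Bool)) (n : Fin (N + 1) → ℕ) :
    Measure ((t : Fin (N + 1)) → Fin (n t) → X × Bool) :=
  Measure.pi fun t => Measure.pi fun _ => P t

/-- Membership in the multisource class `M(Cr, {ρ_t}, {n_t}, Cb, β)`:
(A1) a common optimal classifier, (A2) transfer exponents to the target
`D = P (Fin.last N)`, (A3) Bernstein class condition for every task. -/
def MemClass (H : Set (X → Bool)) (P : Fin (N + 1) → Measure (X × Bool))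
    (Cr : ℝ) (ρ : Fin (N + 1) → ℝ) (Cb β : ℝ) : Prop :=
  (∀ t, IsProbabilityMeasure (P t)) ∧
  (∃ hstar ∈ H, ∀ t, IsOpt H (P t) hstar) ∧
  (∀ t, Transfer H (P t) (P (Fin.last N)) Cr (ρ t)) ∧
  (∀ t, Bernstein H (P t) Cb β)

/-- Empirical risk over the aggregation of the datasets indexed by `T`. -/
def empRiskAgg {n : Fin (N + 1) → ℕ} (Z : (t : Fin (N + 1)) → Fin (n t) → X × Bool)
    (T : Finset (Fin (N + 1))) (h : X → Bool) : ℝ :=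
  (∑ t ∈ T, ∑ i, if h (Z t i).1 ≠ (Z t i).2 then (1 : ℝ) else 0) / (∑ t ∈ T, (n t : ℝ))

/-- Empirical disagreement over the aggregation of the datasets indexed by `T`. -/
def empDisAgg {n : Fin (N + 1) → ℕ} (Z : (t : Fin (N + 1)) → Fin (n t) → X × Bool)
    (T : Finset (Fin (N + 1))) (h h' : X → Bool) : ℝ :=
  (∑ t ∈ T, ∑ i, if h (Z t i).1 ≠ h' (Z t i).1 then (1 : ℝ) else 0) / (∑ t ∈ T, (n t : ℝ))

/-- `h` is an ERM over the aggregated sample `Z^T`. -/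
def IsERMAgg (H : Set (X → Bool)) {n : Fin (N + 1) → ℕ}
    (Z : (t : Fin (N + 1)) → Fin (n t) → X × Bool) (T : Finset (Fin (N + 1)))
    (h : X → Bool) : Prop :=
  h ∈ H ∧ ∀ h' ∈ H, empRiskAgg Z T h ≤ empRiskAgg Z T h'

/-- Partial sum of sample sizes along the sorted order (real valued). -/
def NtR (n : Fin (N + 1) → ℕ) (σp : Equiv.Perm (Fin (N + 1))) (t : Fin (N + 1)) : ℝ :=
  ∑ s ∈ Finset.Iic t, (n (σp s) : ℝ)

/-- Partial sum of sample sizes along the sorted order (natural number valued). -/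
def NtN (n : Fin (N + 1) → ℕ) (σp : Equiv.Perm (Fin (N + 1))) (t : Fin (N + 1)) : ℕ :=
  ∑ s ∈ Finset.Iic t, n (σp s)

/-- The average transfer exponent `ρ̄_t`. -/
def rhoBar (n : Fin (N + 1) → ℕ) (ρ : Fin (N + 1) → ℝ) (σp : Equiv.Perm (Fin (N + 1)))
    (t : Fin (N + 1)) : ℝ :=
  (∑ s ∈ Finset.Iic t, (n (σp s) : ℝ) * ρ (σp s)) / NtR n σp t

/-- `σp` sorts the transfer exponents in nondecreasing order:
`ρ_(1) ≤ ρ_(2) ≤ … ≤ ρ_(N+1)`. -/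
def SortedFor (ρ : Fin (N + 1) → ℝ) (σp : Equiv.Perm (Fin (N + 1))) : Prop :=
  ∀ i j : Fin (N + 1), i ≤ j → ρ (σp i) ≤ ρ (σp j)

/-- The oracle rate `Cr (Cc (d log(N_t/d) + log(1/δ)) / N_t)^{1/((2-β) ρ̄_t)}`. -/
def rateB (Cr Cc β : ℝ) (d : ℕ) (δ : ℝ) (n : Fin (N + 1) → ℕ) (ρ : Fin (N + 1) → ℝ)
    (σp : Equiv.Perm (Fin (N + 1))) (t : Fin (N + 1)) : ℝ :=
  Cr * (Cc * ((d : ℝ) * plog (NtR n σp t / d) + plog (1 / δ)) / NtR n σp t)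
      ^ (1 / ((2 - β) * rhoBar n ρ σp t))

/-- The minimax-lower-bound rate `(c₂ d / (N_t log² N_t))^{1/((2-β) ρ̄_t)}`. -/
def rateLow (β c2 : ℝ) (d : ℕ) (n : Fin (N + 1) → ℕ) (ρ : Fin (N + 1) → ℝ)
    (σp : Equiv.Perm (Fin (N + 1))) (t : Fin (N + 1)) : ℝ :=
  (c2 * d / (NtR n σp t * plog (NtR n σp t) ^ 2)) ^ (1 / ((2 - β) * rhoBar n ρ σp t))

end Multi

section TwoPoint

variable {X : Type u} [MeasurableSpace X]

/-- The distribution on `{x₀, x₁} × {±1}` with marginal mass `w` at `x₁`,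
regression value `η = P(Y = 1 | x₁)` and deterministic label `1` at `x₀`.
The label `+1` is encoded as `true` and `-1` as `false`. -/
def twoPt (x0 x1 : X) (w η : ℝ) : Measure (X × Bool) :=
  ENNReal.ofReal (w * η) • Measure.dirac (x1, true)
    + ENNReal.ofReal (w * (1 - η)) • Measure.dirac (x1, false)
    + ENNReal.ofReal (1 - w) • Measure.dirac (x0, true)

/-- The sign `±1` associated with `σ : Bool`. -/
def sgn (σ : Bool) : ℝ := if σ then 1 else -1

/-- `ε = (n N_P)^{-1/(2-β)}`. -/
def epsSrc (β : ℝ) (n NP : ℕ) : ℝ := ((n * NP : ℕ) : ℝ) ^ (-(1 / (2 - β)))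

/-- `ε₀ = 1 ∧ n_D^{-1/(2-β)}` (with the convention `1/0 = ∞`). -/
def epsTgt (β : ℝ) (nD : ℕ) : ℝ := (max 1 (nD : ℝ)) ^ (-(1 / (2 - β)))

/-- The target distribution `D_σ`. -/
def Dtgt (x0 x1 : X) (β c0 : ℝ) (nD : ℕ) (σ : Bool) : Measure (X × Bool) :=
  twoPt x0 x1 (epsTgt β nD ^ β / 2) (1 / 2 + sgn σ * c0 * epsTgt β nD ^ (1 - β))

/-- The noisy source distribution `P_σ`. -/
def Psrc (x0 x1 : X) (β c1 : ℝ) (n NP : ℕ) (σ : Bool) : Measure (X × Bool) :=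
  twoPt x0 x1 (c1 * epsSrc β n NP ^ β) (1 / 2 + sgn σ * epsSrc β n NP ^ (1 - β))

/-- The benign source distribution `Q_σ`. -/
def Qsrc (x0 x1 : X) (σ : Bool) : Measure (X × Bool) :=
  twoPt x0 x1 1 ((1 + sgn σ) / 2)

/-- The mixture distribution `α_P P_σ^n + α_Q Q_σ^n` of a source block. -/
def blockM (x0 x1 : X) (β c1 : ℝ) (n NP NQ : ℕ) (σ : Bool) :
    Measure (Fin n → X × Bool) :=
  ENNReal.ofReal ((NP : ℝ) / (NP + NQ)) • Measure.pi (fun _ => Psrc x0 x1 β c1 n NP σ)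
    + ENNReal.ofReal ((NQ : ℝ) / (NP + NQ)) • Measure.pi (fun _ => Qsrc x0 x1 σ)

/-- The target block distribution `D_σ^{n_D}`. -/
def tgtM (x0 x1 : X) (β c0 : ℝ) (nD : ℕ) (σ : Bool) : Measure (Fin nD → X × Bool) :=
  Measure.pi fun _ => Dtgt x0 x1 β c0 nD σ

/-- The joint distribution `Γ_σ = (α_P P_σ^n + α_Q Q_σ^n)^N × D_σ^{n_D}`. -/
def Gamma (x0 x1 : X) (β c0 c1 : ℝ) (n nD NP NQ : ℕ) (σ : Bool) :
    Measure ((Fin (NP + NQ) → Fin n → X × Bool) × (Fin nD → X × Bool)) :=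
  (Measure.pi fun _ : Fin (NP + NQ) => blockM x0 x1 β c1 n NP NQ σ).prod
    (tgtM x0 x1 β c0 nD σ)

/-- A single source block together with the latent indicator of the mixture
component (`true` for the `P_σ` component, `false` for the `Q_σ` component). -/
def blockJ (x0 x1 : X) (β c1 : ℝ) (n NP NQ : ℕ) (σ : Bool) :
    Measure (Bool × (Fin n → X × Bool)) :=
  ENNReal.ofReal ((NP : ℝ) / (NP + NQ)) •
      (Measure.dirac true).prod (Measure.pi fun _ => Psrc x0 x1 β c1 n NP σ)
    + ENNReal.ofReal ((NQ : ℝ) / (NP + NQ)) •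
      (Measure.dirac false).prod (Measure.pi fun _ => Qsrc x0 x1 σ)

/-- The joint distribution `Γ_σ`, augmented with the latent component
indicators of the mixture blocks. -/
def GammaJ (x0 x1 : X) (β c0 c1 : ℝ) (n nD NP NQ : ℕ) (σ : Bool) :
    Measure ((Fin (NP + NQ) → Bool × (Fin n → X × Bool)) × (Fin nD → X × Bool)) :=
  (Measure.pi fun _ : Fin (NP + NQ) => blockJ x0 x1 β c1 n NP NQ σ).prod
    (tgtM x0 x1 β c0 nD σ)

/-- `N̂_σ(Z)`: number of homogeneous blocks with all points at `x₁` and label `σ`. -/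
def NhatS (x1 : X) {Nn n : ℕ} (Zb : Fin Nn → Fin n → X × Bool) (σ : Bool) : ℕ :=
  ({t | ∀ i, Zb t i = (x1, σ)} : Set (Fin Nn)).ncard

/-- `n̂_σ(Z)`: total number of points at `x₁` with label `σ`. -/
def nhatS (x1 : X) {Nn n : ℕ} (Zb : Fin Nn → Fin n → X × Bool) (σ : Bool) : ℕ :=
  ({p : Fin Nn × Fin n | Zb p.1 p.2 = (x1, σ)}).ncard

/-- `ñ_σ(Z) = n̂_σ(Z) − n N̂_σ(Z)`: number of points at `x₁` with label `σ`
excluding homogeneous blocks. -/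
def ntildeS (x1 : X) {Nn n : ℕ} (Zb : Fin Nn → Fin n → X × Bool) (σ : Bool) : ℕ :=
  nhatS x1 Zb σ - n * NhatS x1 Zb σ

/-- `N̂_P(W)`: number of homogeneous blocks generated by the `P₋` component. -/
def NhatP (x1 : X) {Nn n : ℕ} (Wb : Fin Nn → Bool × (Fin n → X × Bool)) : ℕ :=
  ({t | (Wb t).1 = true ∧ ∃ b, ∀ i, (Wb t).2 i = (x1, b)} : Set (Fin Nn)).ncard

/-- `N̂_Q(W)`: number of homogeneous blocks generated by the `Q₋` component. -/
def NhatQ (x1 : X) {Nn n : ℕ} (Wb : Fin Nn → Bool × (Fin n → X × Bool)) : ℕ :=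
  ({t | (Wb t).1 = false ∧ ∃ b, ∀ i, (Wb t).2 i = (x1, b)} : Set (Fin Nn)).ncard

end TwoPoint

section RiskFacts

variable {X : Type*}

theorem empDis_comm {m : ℕ} (S : Fin m → X × Bool) (a b : X → Bool) :
    empDis S a b = empDis S b a := by
  simp only [empDis, ne_comm]

theorem empDis_triangle {m : ℕ} (S : Fin m → X × Bool) (a b c : X → Bool) :
    empDis S a c ≤ empDis S a b + empDis S b c := by
  rw [empDis, empDis, empDis, ← add_div, ← Finset.sum_add_distrib]
  gcongr with j
  cases a (S j).1 <;> cases b (S j).1 <;> cases c (S j).1 <;> norm_num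

variable [MeasurableSpace X]

theorem risk_nonneg (Q : Measure (X × Bool)) (g : X → Bool) : 0 ≤ risk Q g :=
  ENNReal.toReal_nonneg

theorem risk_le_one (Q : Measure (X × Bool)) [IsProbabilityMeasure Q] (g : X → Bool) :
    risk Q g ≤ 1 :=
  measureReal_le_one

theorem dis_le_one (Q : Measure (X × Bool)) [IsProbabilityMeasure Q] (g g' : X → Bool) :
    dis Q g g' ≤ 1 :=
  measureReal_le_one

theorem dis_comm (Q : Measure (X × Bool)) (a b : X → Bool) : dis Q a b = dis Q b a := by
  simp only [dis, ne_comm]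

theorem dis_triangle (Q : Measure (X × Bool)) [IsFiniteMeasure Q] (a b c : X → Bool) :
    dis Q a c ≤ dis Q a b + dis Q b c := by
  refine (measureReal_mono (fun p hp => ?_)).trans (measureReal_union_le _ _)
  by_contra! h
  simp_all

theorem IsOpt.excess_eq {H : Set (X → Bool)} {Q : Measure (X × Bool)} {hstar : X → Bool}
    (hopt : IsOpt H Q hstar) (g : X → Bool) : excess H Q g = risk Q g - risk Q hstar := by
  have : Nonempty H := ⟨⟨hstar, hopt.1⟩⟩
  refine congrArg _ (le_antisymm ?_ (le_ciInf fun h' : H => hopt.2 h'.1 h'.2))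
  exact ciInf_le (f := fun h' : H => risk Q h')
    ⟨0, Set.forall_mem_range.2 fun h' => risk_nonneg _ _⟩ ⟨hstar, hopt.1⟩

/-- A Bernstein condition, stated at some risk minimizer, transfers to every other one. -/
theorem Bernstein.dis_le {H : Set (X → Bool)} {P : Measure (X × Bool)} [IsProbabilityMeasure P]
    {Cb β : ℝ} (hB : Bernstein H P Cb β) (hCb : 1 ≤ Cb) (hβ : 0 ≤ β) {hstar : X → Bool}
    (hopt : IsOpt H P hstar) {g : X → Bool} (hg : g ∈ H) :
    dis P g hstar ≤ Cb * (risk P g - risk P hstar) ^ β := by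
  obtain ⟨h₀, hopt₀, hdis⟩ := hB
  have hexcess : ∀ g', excess H P g' = risk P g' - risk P hstar := fun g' => by
    rw [hopt₀.excess_eq, le_antisymm (hopt₀.2 _ hopt.1) (hopt.2 _ hopt₀.1)]
  rcases hβ.eq_or_lt with rfl | hβ
  · simpa using (dis_le_one P g hstar).trans hCb
  · have h₀star : dis P hstar h₀ ≤ 0 := by
      simpa [hexcess, Real.zero_rpow hβ.ne'] using hdis hstar hopt.1
    calc dis P g hstar ≤ dis P g h₀ + dis P hstar h₀ := dis_comm P hstar h₀ ▸ dis_triangle P _ _ _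
      _ ≤ Cb * (risk P g - risk P hstar) ^ β := by linarith [hexcess g ▸ hdis g hg]

end RiskFacts

theorem sum_div_card_le_mul_rpow {ι : Type*} (s : Finset ι) {Cb β : ℝ} (hCb : 0 ≤ Cb)
    (hβ0 : 0 ≤ β) (hβ1 : β ≤ 1) {D E : ι → ℝ} (hE : ∀ i ∈ s, 0 ≤ E i)
    (hDE : ∀ i ∈ s, D i ≤ Cb * E i ^ β) :
    (∑ i ∈ s, D i) / #s ≤ Cb * ((∑ i ∈ s, E i) / #s) ^ β := by
  rcases s.eq_empty_or_nonempty with rfl | hs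
  · simp only [Finset.sum_empty, zero_div]
    exact mul_nonneg hCb (Real.rpow_nonneg le_rfl β)
  have hw : ∑ _i ∈ s, (1 / #s : ℝ) = 1 := by simp [hs.card_ne_zero]
  have hjensen := (Real.concaveOn_rpow hβ0 hβ1).le_map_sum (fun _ _ => by positivity) hw hE
  simp only [smul_eq_mul, ← Finset.mul_sum] at hjensen
  calc (∑ i ∈ s, D i) / #s ≤ 1 / #s * ∑ i ∈ s, Cb * E i ^ β := by
        rw [← one_div_mul_eq_div]; gcongr with i hi; exact hDE i hi
    _ ≤ Cb * (1 / #s * ∑ i ∈ s, E i) ^ β := by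
        rw [← Finset.mul_sum, mul_left_comm]; gcongr
    _ = _ := by rw [one_div_mul_eq_div]

theorem mul_sqrt_mul_le {a b w : ℝ} (hb : 0 ≤ b) (hw : 0 ≤ w) :
    a * √(b * w) ≤ (a ^ 2 * b + w) / 2 := by
  rw [Real.sqrt_mul hb]
  nlinarith [sq_nonneg (a * √b - √w), Real.sq_sqrt hb, Real.sq_sqrt hw]

theorem le_mul_rpow_of_le_mul_sqrt_rpow_add {a b K w β : ℝ} (hβ1 : β ≤ 1)
    (hK0 : 0 < K) (hK1 : K ≤ 1) (ha : 0 ≤ a) (hb : 0 ≤ b) (hw : 0 ≤ w)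
    (h : w ≤ a * √(K * w ^ β) + b * K) :
    w ≤ max 1 (a ^ 2 + 2 * b) * K ^ (1 / (2 - β)) := by
  set B := K ^ (1 / (2 - β))
  have hB0 : 0 < B := by positivity
  have hKB : K = B ^ (2 - β) := by
    rw [← Real.rpow_mul hK0.le, one_div_mul_cancel (by linarith), Real.rpow_one]
  have hKleB : K ≤ B := by
    have h := Real.rpow_le_rpow_of_exponent_ge hK0 hK1
      (show 1 / (2 - β) ≤ 1 by rw [div_le_one (by linarith)]; linarith)
    rwa [Real.rpow_one] at h
  rcases le_or_gt w B with hwB | hBw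
  · exact hwB.trans (le_mul_of_one_le_left hB0.le (le_max_left _ _))
  have hKw : K * w ^ β ≤ B * w := by
    calc K * w ^ β = B * (B ^ (1 - β) * w ^ β) := by
          rw [hKB, ← mul_assoc, ← Real.rpow_one_add' hB0.le (by linarith)]; ring_nf
      _ ≤ B * (w ^ (1 - β) * w ^ β) := by gcongr
      _ = B * w := by rw [← Real.rpow_add (hB0.trans hBw), sub_add_cancel, Real.rpow_one]
  have hwle : w ≤ (a ^ 2 + 2 * b) * B := by
    have hsq : a * √(K * w ^ β) ≤ a * √(B * w) := by gcongr
    nlinarith [mul_sqrt_mul_le (a := a) hB0.le hw]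
  exact hwle.trans (by gcongr; exact le_max_right _ _)

theorem max_le_of_localized {C0 Cb β ε x y Dx Dy dxy : ℝ} (hC0 : 0 ≤ C0) (hCb : 0 ≤ Cb)
    (hβ : 0 ≤ β) (hε : 0 ≤ ε) (hx0 : 0 ≤ x) (hy0 : 0 ≤ y)
    (hDx : Dx ≤ Cb * x ^ β) (hDy : Dy ≤ Cb * y ^ β) (hdxy : dxy ≤ 2 * Dx + 2 * Dy + 2 * C0 * ε)
    (hx : x ≤ C0 * √(dxy * ε) + C0 * √(Dx * ε) + 2 * C0 * ε)
    (hy : y ≤ C0 * √(Dy * ε) + C0 * ε) :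
    max x y ≤ 3 * C0 * √(Cb * ε * max x y ^ β) + (√(2 * C0) + 2) * C0 * ε := by
  set w := max x y
  set A := √(Cb * ε * w ^ β)
  have hCbw : ∀ z, 0 ≤ z → z ≤ w → Cb * z ^ β ≤ Cb * w ^ β := fun z hz hzw => by gcongr
  have hDxA : √(Dx * ε) ≤ A :=
    Real.sqrt_le_sqrt (by nlinarith [hCbw x hx0 (le_max_left _ _)])
  have hDyA : √(Dy * ε) ≤ A :=
    Real.sqrt_le_sqrt (by nlinarith [hCbw y hy0 (le_max_right _ _)])
  have hdxyA : √(dxy * ε) ≤ 2 * A + √(2 * C0) * ε := by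
    rw [Real.sqrt_le_left (by positivity), add_sq, mul_pow, Real.sq_sqrt (by positivity),
      mul_pow, Real.sq_sqrt (by positivity)]
    nlinarith [hCbw x hx0 (le_max_left _ _), hCbw y hy0 (le_max_right _ _),
      mul_nonneg (mul_nonneg (Real.sqrt_nonneg (Cb * ε * w ^ β)) (Real.sqrt_nonneg (2 * C0))) hε]
  have hCA : 0 ≤ C0 * A := by positivity
  have hC0ε : 0 ≤ √(2 * C0) * C0 * ε := by positivity
  refine max_le ?_ ?_
  · nlinarith [mul_le_mul_of_nonneg_left hdxyA hC0, mul_le_mul_of_nonneg_left hDxA hC0]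
  · nlinarith [mul_le_mul_of_nonneg_left hDyA hC0]

theorem le_rpow_of_localized {C0 Cb β ε x y Dx Dy dxy : ℝ} (hC0 : 1 / 3 ≤ C0) (hCb : 2 ≤ Cb)
    (hβ0 : 0 ≤ β) (hβ1 : β ≤ 1) (hε : 0 < ε) (hx0 : 0 ≤ x) (hx1 : x ≤ 1) (hy0 : 0 ≤ y)
    (hDx : Dx ≤ Cb * x ^ β) (hDy : Dy ≤ Cb * y ^ β) (hdxy : dxy ≤ 2 * Dx + 2 * Dy + 2 * C0 * ε)
    (hx : x ≤ C0 * √(dxy * ε) + C0 * √(Dx * ε) + 2 * C0 * ε)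
    (hy : y ≤ C0 * √(Dy * ε) + C0 * ε) :
    x ≤ 32 * C0 ^ 2 * (Cb * ε) ^ (1 / (2 - β)) := by
  have h32 : 1 ≤ 32 * C0 ^ 2 := by nlinarith
  have hK0 : 0 < Cb * ε := by positivity
  rcases le_or_gt 1 (Cb * ε) with hK1 | hK1
  · calc x ≤ 1 := hx1
      _ ≤ 32 * C0 ^ 2 * (Cb * ε) ^ (1 / (2 - β)) :=
        one_le_mul_of_one_le_of_one_le h32
          (Real.one_le_rpow hK1 (div_nonneg zero_le_one (by linarith)))
  have hsqrt : √(2 * C0) ≤ C0 + 1 / 2 := by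
    rw [Real.sqrt_le_left (by linarith)]; nlinarith [sq_nonneg (C0 - 1 / 2)]
  have hw := max_le_of_localized (by linarith) (by linarith) hβ0 hε.le hx0 hy0 hDx hDy hdxy hx hy
  have hw' : max x y ≤ 3 * C0 * √(Cb * ε * max x y ^ β)
      + ((√(2 * C0) + 2) * C0 / 2) * (Cb * ε) := by
    nlinarith [mul_nonneg (mul_nonneg (add_nonneg (Real.sqrt_nonneg (2 * C0)) zero_le_two)
      (by linarith : (0:ℝ) ≤ C0)) hε.le]
  have hfix := le_mul_rpow_of_le_mul_sqrt_rpow_add hβ1 hK0 hK1.le (by positivity) (by positivity)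
    (le_max_of_le_left hx0) hw'
  calc x ≤ max x y := le_max_left _ _
    _ ≤ _ := hfix
    _ ≤ _ := by
      gcongr
      refine max_le h32 ?_
      nlinarith

theorem eps_pos {d m : ℕ} (hm : 0 < m) (δ : ℝ) : 0 < eps d m δ := by
  have := le_max_right (Real.log ((m : ℝ) / d)) 1
  have := le_max_right (Real.log (1 / δ)) 1
  unfold eps plog
  positivity

section SingleSample

variable {Y : Type u} [MeasurableSpace Y]

def bernsteinEvent (C0 : ℝ) (H : Set (Y → Bool)) (d m : ℕ) (δ : ℝ)
    (μ : Fin m → Measure (Y × Bool)) : Set (Fin m → Y × Bool) :=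
  {S | ∀ h ∈ H, ∀ h' ∈ H,
    ((∑ i, (risk (μ i) h - risk (μ i) h')) / m ≤
        empExcess S h h'
          + C0 * Real.sqrt (min ((∑ i, dis (μ i) h h') / m) (empDis S h h') * eps d m δ)
          + C0 * eps d m δ)
    ∧ ((1 / 2) * ((∑ i, dis (μ i) h h') / m) - C0 * eps d m δ ≤ empDis S h h')
    ∧ (empDis S h h' ≤ 2 * ((∑ i, dis (μ i) h h') / m) + C0 * eps d m δ)}

theorem UnifBernstein.le_pi_bernsteinEvent {C0 : ℝ} (hUB : UnifBernstein.{u} C0)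
    {H : Set (Y → Bool)} {d : ℕ} (hVC : VCEq H d) {m : ℕ} (hm : 0 < m) {δ : ℝ}
    (hδ0 : 0 < δ) (hδ1 : δ < 1) (μ : Fin m → Measure (Y × Bool))
    [∀ i, IsProbabilityMeasure (μ i)] :
    ENNReal.ofReal (1 - δ) ≤ Measure.pi μ (bernsteinEvent C0 H d m δ μ) :=
  hUB Y _ H d hVC m hm δ hδ0 hδ1 μ inferInstance

theorem excess_le_of_mem_bernsteinEvent {C0 Cb β δ : ℝ} {H : Set (Y → Bool)} {d m : ℕ}
    (hm : 0 < m) {μ : Fin m → Measure (Y × Bool)} [∀ i, IsProbabilityMeasure (μ i)]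
    (hC0 : 1 / 3 ≤ C0) (hCb : 2 ≤ Cb) (hβ0 : 0 ≤ β) (hβ1 : β ≤ 1) {hstar : Y → Bool}
    (hopt : ∀ i, IsOpt H (μ i) hstar) (hB : ∀ i, Bernstein H (μ i) Cb β)
    {S : Fin m → Y × Bool} (hS : S ∈ bernsteinEvent C0 H d m δ μ)
    {erm : Y → Bool} (herm : IsERM H S erm) {h : Y → Bool} (hh : h ∈ H)
    (hcon : empExcess S h erm ≤ C0 * √(empDis S h erm * eps d m δ) + C0 * eps d m δ) :
    (∑ i, (risk (μ i) h - risk (μ i) hstar)) / m ≤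
      32 * C0 ^ 2 * (Cb * eps d m δ) ^ (1 / (2 - β)) := by
  set ε := eps d m δ
  have hε : 0 < ε := eps_pos hm δ
  have hstarH : hstar ∈ H := (hopt ⟨0, hm⟩).1
  have hdis : ∀ g ∈ H, (∑ i, dis (μ i) g hstar) / m ≤
      Cb * ((∑ i, (risk (μ i) g - risk (μ i) hstar)) / m) ^ β := fun g hg => by
    simpa using sum_div_card_le_mul_rpow Finset.univ (by linarith) hβ0 hβ1
      (fun i _ => sub_nonneg.2 ((hopt i).2 g hg))
      (fun i _ => (hB i).dis_le (by linarith) hβ0 (hopt i) hg)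
  have hexcess_nonneg : ∀ g ∈ H, 0 ≤ (∑ i, (risk (μ i) g - risk (μ i) hstar)) / m :=
    fun g hg => div_nonneg (Finset.sum_nonneg fun i _ => sub_nonneg.2 ((hopt i).2 g hg))
      (Nat.cast_nonneg m)
  obtain ⟨hx, -, hDx⟩ := hS h hh hstar hstarH
  obtain ⟨hy, -, hDy⟩ := hS erm herm.1 hstar hstarH
  have hmin : ∀ a b : ℝ, C0 * √(min a b * ε) ≤ C0 * √(a * ε) := fun a b => by
    gcongr
    exact min_le_left a b
  refine le_rpow_of_localized hC0 hCb hβ0 hβ1 hε (hexcess_nonneg h hh) ?_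
    (hexcess_nonneg erm herm.1) (hdis h hh) (hdis erm herm.1)
    (dxy := empDis S h erm) ?_ ?_ ?_
  · refine div_le_one_of_le₀ ?_ (Nat.cast_nonneg m)
    calc _ ≤ ∑ _i : Fin m, (1 : ℝ) := Finset.sum_le_sum fun i _ => by
          linarith [risk_le_one (μ i) h, risk_nonneg (μ i) hstar]
      _ = m := by simp
  · linarith [empDis_triangle S h hstar erm, empDis_comm S hstar erm]
  · have herm_star := herm.2 hstar hstarH
    unfold empExcess at hx hcon
    linarith [hmin ((∑ i, dis (μ i) h hstar) / m) (empDis S h hstar)]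
  · have herm_star := herm.2 hstar hstarH
    unfold empExcess at hy
    linarith [hmin ((∑ i, dis (μ i) erm hstar) / m) (empDis S erm hstar)]

end SingleSample

theorem mem_of_measure_compl_singleton_lt {α : Type*} [MeasurableSpace α] {μ : Measure α}
    {E : Set α} {a : α} (h : μ {a}ᶜ < μ E) : a ∈ E := by
  by_contra ha
  exact (measure_mono (Set.subset_compl_singleton_iff.2 ha)).not_gt h

theorem eps_one_one {δ : ℝ} (hδ : Real.log (1 / δ) ≤ 1) : eps 1 1 δ = 2 := by
  rw [eps, plog, plog, max_eq_right hδ]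
  norm_num

theorem UnifBernstein.one_third_le {C0 : ℝ} (hUB : UnifBernstein.{u} C0) : 1 / 3 ≤ C0 := by
  let hf : PUnit.{u + 1} → Bool := fun _ => false
  let ht : PUnit.{u + 1} → Bool := fun _ => true
  have hVC : VCEq ({hf, ht} : Set (PUnit.{u + 1} → Bool)) 1 := by
    refine ⟨fun s _ => Finset.card_le_one.2 fun a _ b _ => Subsingleton.elim a b,
      {PUnit.unit}, fun f => ?_, Finset.card_singleton _⟩
    cases hb : f PUnit.unit
    · exact ⟨hf, by simp, by simp [hf, hb]⟩
    · exact ⟨ht, by simp, by simp [ht, hb]⟩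
  let μ : Measure (PUnit.{u + 1} × Bool) :=
    ENNReal.ofReal (3 / 5) • Measure.dirac (PUnit.unit, true)
      + ENNReal.ofReal (2 / 5) • Measure.dirac (PUnit.unit, false)
  have hμ : ∀ A : Set (PUnit.{u + 1} × Bool), μ A =
      ENNReal.ofReal (3 / 5) * A.indicator 1 (PUnit.unit, true)
        + ENNReal.ofReal (2 / 5) * A.indicator 1 (PUnit.unit, false) := fun A => by
    simp [μ]
  have hmass : ENNReal.ofReal (3 / 5) + ENNReal.ofReal (2 / 5) = 1 := by
    rw [← ENNReal.ofReal_add (by norm_num) (by norm_num)]; norm_num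
  have : IsProbabilityMeasure μ := ⟨by simp [hμ, hmass]⟩
  let S₀ : Fin 1 → PUnit.{u + 1} × Bool := fun _ => (PUnit.unit, false)
  have hS₀ : S₀ ∈ bernsteinEvent C0 {hf, ht} 1 1 (37 / 100) fun _ => μ := by
    refine mem_of_measure_compl_singleton_lt (lt_of_lt_of_le ?_
      (hUB.le_pi_bernsteinEvent hVC one_pos (by norm_num) (by norm_num) fun _ => μ))
    rw [measure_compl (measurableSet_singleton _) (measure_ne_top _ _), Measure.pi_singleton,
      measure_univ, Fin.prod_univ_one, show μ {S₀ 0} = ENNReal.ofReal (2 / 5) by simp [hμ, S₀],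
      ← hmass, ENNReal.add_sub_cancel_right ENNReal.ofReal_ne_top,
      ENNReal.ofReal_lt_ofReal_iff (by norm_num)]
    norm_num
  have hineq := (hS₀ hf (by simp) ht (by simp)).1
  have hlog : Real.log (1 / (37 / 100)) ≤ 1 := by
    rw [Real.log_le_iff_le_exp (by norm_num)]
    linarith [Real.exp_one_gt_d9]
  simp only [eps_one_one hlog] at hineq
  simp [hμ, hmass, risk, dis, empExcess, empRisk, empDis, hf, ht, S₀] at hineq
  rw [ENNReal.toReal_ofReal (by norm_num), ENNReal.toReal_ofReal (by norm_num)] at hineq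
  have hsqrt2 : √2 ≤ 3 / 2 := by rw [Real.sqrt_le_left (by norm_num)]; norm_num
  nlinarith [Real.sqrt_nonneg 2]

section Pooling

variable {ι : Type*} (n : ι → ℕ) (I : Finset ι)

def poolEquiv : (Σ t : I, Fin (n t)) ≃ Fin (∑ t ∈ I, n t) :=
  Fintype.equivFinOfCardEq (by simp [Finset.sum_attach I n])

def poolTask (j : Fin (∑ t ∈ I, n t)) : ι := ((poolEquiv n I).symm j).1

variable {n} {C : Type*}

def pool (Z : (t : ι) → Fin (n t) → C) (j : Fin (∑ t ∈ I, n t)) : C :=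
  Z ((poolEquiv n I).symm j).1 ((poolEquiv n I).symm j).2

theorem sum_pool (Z : (t : ι) → Fin (n t) → C) (f : C → ℝ) :
    ∑ j, f (pool I Z j) = ∑ t ∈ I, ∑ i, f (Z t i) := calc
  _ = ∑ p : Σ t : I, Fin (n t), f (Z p.1 p.2) := by
    rw [← (poolEquiv n I).sum_comp]
    exact Finset.sum_congr rfl fun p _ => by unfold pool; rw [Equiv.symm_apply_apply]
  _ = _ := by rw [Fintype.sum_sigma]; exact Finset.sum_coe_sort I fun t => ∑ i, f (Z t i)

theorem sum_poolTask (F : ι → ℝ) : ∑ j, F (poolTask n I j) = ∑ t ∈ I, n t * F t := calc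
  _ = ∑ p : Σ t : I, Fin (n t), F p.1 := by
    rw [← (poolEquiv n I).sum_comp]; simp [poolTask]
  _ = _ := by simp [Fintype.sum_sigma, Finset.sum_attach I fun t => n t * F t]

/-- `E` need not be measurable, hence the detour through measurable equivalences and the
product with the unused coordinates instead of `Measure.map`. -/
theorem pi_preimage_pool [Fintype ι] [MeasurableSpace C] (P : ι → Measure C)
    [∀ t, IsProbabilityMeasure (P t)] (E : Set (Fin (∑ t ∈ I, n t) → C)) :
    Measure.pi (fun t => Measure.pi fun _ : Fin (n t) => P t) (pool I ⁻¹' E) =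
      Measure.pi (fun j => P (poolTask n I j)) E := by
  classical
  let Ψ : ((t : I) → Fin (n t) → C) ≃ᵐ (Fin (∑ t ∈ I, n t) → C) :=
    (MeasurableEquiv.piCurry fun (t : I) (_ : Fin (n t)) => C).symm.trans
      (MeasurableEquiv.piCongrLeft (fun _ => C) (poolEquiv n I).symm).symm
  have hΨ : MeasurePreserving Ψ (Measure.pi fun t : I => Measure.pi fun _ : Fin (n t) => P t)
      (Measure.pi fun j => P (poolTask n I j)) := by
    refine MeasurePreserving.comp (μb := Measure.pi fun p : Σ t : I, Fin (n t) => P p.1)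
      (measurePreserving_piCongrLeft (fun p : Σ t : I, Fin (n t) => P p.1)
        (poolEquiv n I).symm).symm ⟨MeasurableEquiv.measurable _, ?_⟩
    simp_rw [← Measure.infinitePi_eq_pi]
    exact Measure.infinitePi_map_piCurry_symm fun (t : I) (_ : Fin (n t)) => P t
  let Φ := (MeasurableEquiv.piEquivPiSubtypeProd (fun t => Fin (n t) → C) (· ∈ I)).trans
    (Ψ.prodCongr (MeasurableEquiv.refl _))
  have hsplit : MeasurePreserving
      (MeasurableEquiv.piEquivPiSubtypeProd (fun t => Fin (n t) → C) (· ∈ I))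
      (Measure.pi fun t => Measure.pi fun _ : Fin (n t) => P t)
      ((Measure.pi fun t : I => Measure.pi fun _ : Fin (n t) => P t).prod
        (Measure.pi fun t : {t // t ∉ I} => Measure.pi fun _ : Fin (n t) => P t)) := by
    convert measurePreserving_piEquivPiSubtypeProd
      (fun t => Measure.pi fun _ : Fin (n t) => P t) (· ∈ I)
  have hΦ := (hΨ.prod (MeasurePreserving.id _)).comp hsplit
  symm
  calc _ = ((Measure.pi fun j => P (poolTask n I j)).prod
        (Measure.pi fun t : {t // t ∉ I} => Measure.pi fun _ : Fin (n t) => P t))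
          (E ×ˢ Set.univ) := by simp [Measure.prod_prod]
    _ = _ := (hΦ.measure_preimage_equiv (f := Φ) _).symm
    _ = Measure.pi (fun t => Measure.pi fun _ : Fin (n t) => P t) (pool I ⁻¹' E) := by
      have hΦ_fst : ∀ Z, (Φ Z).1 = pool I Z := fun Z => funext fun j =>
        Equiv.piCongrLeft_symm_apply (fun _ => C) (poolEquiv n I).symm _ j
      congr 1; ext Z
      simp [hΦ_fst]

end Pooling

section Mixture

variable {X : Type*} [MeasurableSpace X] {ι : Type*} (I : Finset ι) (n : ι → ℕ)

theorem risk_mixture (P : ι → Measure (X × Bool)) [∀ t, IsFiniteMeasure (P t)] (g : X → Bool) :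
    risk (((∑ t ∈ I, n t : ℕ) : ENNReal)⁻¹ • ∑ t ∈ I, (n t : ENNReal) • P t) g =
      (∑ t ∈ I, n t * risk (P t) g) / (∑ t ∈ I, n t : ℕ) := by
  simp only [risk, Measure.smul_apply, Measure.coe_finsetSum, Finset.sum_apply, smul_eq_mul,
    ENNReal.toReal_mul, ENNReal.toReal_inv, ENNReal.toReal_natCast, div_eq_inv_mul]
  rw [ENNReal.toReal_sum fun t _ => ENNReal.mul_ne_top (by simp) (measure_ne_top _ _)]
  simp [ENNReal.toReal_mul]

theorem excess_mixture {H : Set (X → Bool)} (P : ι → Measure (X × Bool))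
    [∀ t, IsFiniteMeasure (P t)] {hstar : X → Bool} (hstarH : hstar ∈ H)
    (hopt : ∀ t, IsOpt H (P t) hstar) (g : X → Bool) :
    excess H (((∑ t ∈ I, n t : ℕ) : ENNReal)⁻¹ • ∑ t ∈ I, (n t : ENNReal) • P t) g =
      (∑ t ∈ I, n t * (risk (P t) g - risk (P t) hstar)) / (∑ t ∈ I, n t : ℕ) := by
  have hopt_mixture : IsOpt H (((∑ t ∈ I, n t : ℕ) : ENNReal)⁻¹ • ∑ t ∈ I, (n t : ENNReal) • P t)
      hstar := ⟨hstarH, fun h' hh' => by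
    rw [risk_mixture, risk_mixture]
    gcongr with t
    exact (hopt t).2 h' hh'⟩
  rw [hopt_mixture.excess_eq, risk_mixture, risk_mixture, ← sub_div, ← Finset.sum_sub_distrib]
  simp only [mul_sub]

end Mixture

section PooledSample

variable {X : Type*} {N : ℕ} {n : Fin (N + 1) → ℕ} (I : Finset (Fin (N + 1)))
  (Z : (t : Fin (N + 1)) → Fin (n t) → X × Bool)

theorem empRisk_pool (g : X → Bool) : empRisk (pool I Z) g = empRiskAgg Z I g := by
  rw [empRisk, empRiskAgg, sum_pool I Z fun p => if g p.1 ≠ p.2 then 1 else 0, Nat.cast_sum]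

theorem empDis_pool (g g' : X → Bool) : empDis (pool I Z) g g' = empDisAgg Z I g g' := by
  rw [empDis, empDisAgg, sum_pool I Z fun p => if g p.1 ≠ g' p.1 then 1 else 0, Nat.cast_sum]

theorem IsERMAgg.isERM_pool [MeasurableSpace X] {H : Set (X → Bool)} {erm : X → Bool}
    (herm : IsERMAgg H Z I erm) : IsERM H (pool I Z) erm :=
  ⟨herm.1, fun h' hh' => by simpa only [empRisk_pool] using herm.2 h' hh'⟩

end PooledSample

theorem statement16_general (C0 : ℝ) (hUB : UnifBernstein.{u} C0) :
    ∀ (X : Type u) (_ : MeasurableSpace X) (H : Set (X → Bool)) (d : ℕ),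
      VCEq H d →
      ∀ (N : ℕ) (n : Fin (N + 1) → ℕ) (P : Fin (N + 1) → Measure (X × Bool)) (Cb β : ℝ),
        (∀ t, IsProbabilityMeasure (P t)) →
        (∃ hstar ∈ H, ∀ t, IsOpt H (P t) hstar) →
        (∀ t, Bernstein H (P t) Cb β) →
        2 ≤ Cb → 0 ≤ β → β ≤ 1 →
        ∀ I : Finset (Fin (N + 1)), I.Nonempty →
        ∀ δ : ℝ, 0 < δ → δ < 1 →
          ENNReal.ofReal (1 - δ) ≤
            msM P n {Z | ∀ erm, IsERMAgg H Z I erm →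
              ∀ h ∈ H,
                empRiskAgg Z I h - empRiskAgg Z I erm ≤
                    C0 * Real.sqrt (empDisAgg Z I h erm * eps d (∑ t ∈ I, n t) δ)
                      + C0 * eps d (∑ t ∈ I, n t) δ →
                excess H
                    (((∑ t ∈ I, n t : ℕ) : ENNReal)⁻¹ • ∑ t ∈ I, ((n t : ENNReal) • P t)) h ≤
                  32 * C0 ^ 2 * (Cb * eps d (∑ t ∈ I, n t) δ) ^ (1 / (2 - β))} := by
  rintro X _ H d hVC N n P Cb β _ ⟨hstar, hstarH, hopt⟩ hB hCb hβ0 hβ1 I _ δ hδ0 hδ1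
  rcases Nat.eq_zero_or_pos (∑ t ∈ I, n t) with hm | hm
  · -- no sample at all: the mixture risks degenerate to `0 / 0 = 0`
    have : IsProbabilityMeasure (msM P n) := by unfold msM; infer_instance
    refine (ENNReal.ofReal_le_one.2 (by linarith)).trans
      ((measure_univ (μ := msM P n)).symm.trans_le (measure_mono fun Z _ erm _ h _ _ => ?_))
    rw [excess_mixture I n P hstarH hopt, hm, Nat.cast_zero, div_zero]
    exact mul_nonneg (by positivity) (Real.rpow_nonneg (by simp [eps]) _)
  refine (hUB.le_pi_bernsteinEvent hVC hm hδ0 hδ1 fun j => P (poolTask n I j)).trans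
    ((pi_preimage_pool I P _).symm.trans_le (measure_mono ?_))
  intro Z hZ erm herm h hh hcon
  rw [excess_mixture I n P hstarH hopt, ← sum_poolTask]
  refine excess_le_of_mem_bernsteinEvent hm hUB.one_third_le hCb hβ0 hβ1 (fun j => hopt _)
    (fun j => hB _) hZ (herm.isERM_pool I Z) hh ?_
  rwa [empExcess, empRisk_pool, empRisk_pool, empDis_pool]

/-- Lemma: excess risk of constrained hypotheses under the
mixture of tasks.  Let `Π = ∏_t P_t^{n_t}` be such that some single `h* ∈ H`
minimizes risk under every `P_t` and every `P_t` satisfies the Bernstein class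
condition with parameters `(C_β, β)`.  Fix `I ⊆ [N+1]` and let
`P̄_I = N_I⁻¹ Σ_{t ∈ I} n_t P_t` with `N_I = Σ_{t ∈ I} n_t`.  With probability at
least `1 - δ`, every `h ∈ H` satisfying the empirical constraint
`Ê_{Z^I}(h; ĥ_{Z^I}) ≤ C₀ √(P̂_{Z^I}(h ≠ ĥ_{Z^I}) ε(N_I, δ)) + C₀ ε(N_I, δ)`
also satisfies `E_{P̄_I}(h) ≤ 32 C₀² (C_β ε(N_I, δ))^{1/(2-β)}`. -/
theorem statement16 (C0 : ℝ) (hC0 : 0 < C0) (hUB : UnifBernstein.{u} C0) :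
    ∀ (X : Type u) (_ : MeasurableSpace X) (H : Set (X → Bool)) (d : ℕ),
      VCEq H d →
      ∀ (N : ℕ) (n : Fin (N + 1) → ℕ) (P : Fin (N + 1) → Measure (X × Bool)) (Cb β : ℝ),
        (∀ t, IsProbabilityMeasure (P t)) →
        (∃ hstar ∈ H, ∀ t, IsOpt H (P t) hstar) →
        (∀ t, Bernstein H (P t) Cb β) →
        2 ≤ Cb → 0 ≤ β → β ≤ 1 →
        ∀ I : Finset (Fin (N + 1)), I.Nonempty →
        ∀ δ : ℝ, 0 < δ → δ < 1 →
          ENNReal.ofReal (1 - δ) ≤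
            msM P n {Z | ∀ erm, IsERMAgg H Z I erm →
              ∀ h ∈ H,
                empRiskAgg Z I h - empRiskAgg Z I erm ≤
                    C0 * Real.sqrt (empDisAgg Z I h erm * eps d (∑ t ∈ I, n t) δ)
                      + C0 * eps d (∑ t ∈ I, n t) δ →
                excess H
                    (((∑ t ∈ I, n t : ℕ) : ENNReal)⁻¹ • ∑ t ∈ I, ((n t : ENNReal) • P t)) h ≤
                  32 * C0 ^ 2 * (Cb * eps d (∑ t ∈ I, n t) δ) ^ (1 / (2 - β))} :=
  statement16_general C0 hUB

end Paper
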